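/- arXiv:1909.01947 — 3 statements merged into one kernel-verified Lean document; each statement's English description precedes it below -/
import Mathlib

section
/- (Weyl's inequality for singular values) For any A, B ∈ ℝ^{n×m} and any index i with 1 ≤ i ≤ min(m,n), the singular values satisfy |σᵢ(A + B) − σᵢ(A)| ≤ ‖B‖, where ‖B‖ is the spectral norm and singular values are ordered nonincreasingly. -/
/-!
Write the Gram eigenvalues `λ₀ ≤ ⋯ ≤ λₘ₋₁` of `M` in increasing order, so that `σᵢ(M) = √λ_{m-1-i}`.
For `r = m-1-i`, the span of the first `r+1` eigenvectors of `AᵀA` and the span of the last `m-r`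
eigenvectors of `(A+B)ᵀ(A+B)` meet in a nonzero `x` by a dimension count. On `x`,
`σᵢ(A+B)‖x‖ ≤ ‖(A+B)x‖ ≤ ‖Ax‖ + ‖Bx‖ ≤ (σᵢ(A) + ‖B‖)‖x‖`.
Applying this to `A + B` and `-B` gives the other half of the inequality.
-/

open Matrix

/-- Moore–Penrose pseudoinverse predicate (the four Penrose conditions). -/
def IsMP {p q : ℕ} (A : Matrix (Fin p) (Fin q) ℝ) (X : Matrix (Fin q) (Fin p) ℝ) : Prop :=
  A * X * A = A ∧ X * A * X = X ∧ (A * X)ᵀ = A * X ∧ (X * A)ᵀ = X * A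

/-- spectral (operator) norm of a matrix, induced by Euclidean vector norms. -/
noncomputable def specNorm {p q : ℕ} (A : Matrix (Fin p) (Fin q) ℝ) : ℝ :=
  ‖LinearMap.toContinuousLinearMap (Matrix.toEuclideanLin A)‖

/-- Euclidean norm of a vector. -/
noncomputable def enorm {p : ℕ} (x : Fin p → ℝ) : ℝ :=
  ‖(WithLp.equiv 2 (Fin p → ℝ)).symm x‖

/-- the `i`-th largest singular value (0-indexed) of a real matrix. -/
noncomputable def sv {p q : ℕ} (A : Matrix (Fin p) (Fin q) ℝ) (i : Fin q) : ℝ :=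
  Real.sqrt (((Matrix.isHermitian_conjTranspose_mul_self A).eigenvalues ∘
    Tuple.sort (Matrix.isHermitian_conjTranspose_mul_self A).eigenvalues) i.rev)

open Module Submodule

theorem Submodule.exists_ne_zero_mem_of_finrank_lt_add {K V : Type*} [DivisionRing K]
    [AddCommGroup V] [Module K V] [FiniteDimensional K V] {s t : Submodule K V}
    (h : finrank K V < finrank K s + finrank K t) : ∃ x ≠ 0, x ∈ s ∧ x ∈ t := by
  by_contra! H
  have hst : Disjoint s t := disjoint_def.2 fun x hs ht => by_contra fun hx => H x hx hs ht
  exact (finrank_add_finrank_le_of_disjoint hst).not_gt h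

namespace OrthonormalBasis

variable {ι 𝕜 E : Type*} [Fintype ι] [RCLike 𝕜] [NormedAddCommGroup E] [InnerProductSpace 𝕜 E]

theorem repr_eq_zero_of_mem_span_image (b : OrthonormalBasis ι 𝕜 E) {s : Set ι} {x : E}
    (hx : x ∈ span 𝕜 (b '' s)) {j : ι} (hj : j ∉ s) : b.repr x j = 0 := by
  rw [b.repr_apply_apply]
  induction hx using span_induction with
  | mem y hy =>
    obtain ⟨k, hk, rfl⟩ := hy
    exact b.inner_eq_zero fun h => hj (h ▸ hk)
  | zero => exact inner_zero_right _
  | add y z _ _ hy hz => rw [inner_add_right, hy, hz, add_zero]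
  | smul a y _ hy => rw [inner_smul_right, hy, mul_zero]

theorem finrank_span_image (b : OrthonormalBasis ι 𝕜 E) (s : Finset ι) :
    finrank 𝕜 (span 𝕜 (b '' s)) = s.card := by
  rw [Set.image_eq_range]
  exact (finrank_span_eq_card (b.orthonormal.linearIndependent.comp _ Subtype.val_injective)).trans
    (Fintype.card_coe s)

theorem exists_ne_zero_mem_span_Iic_and_span_Ici [FiniteDimensional 𝕜 E] {m : ℕ}
    (b b' : OrthonormalBasis (Fin m) 𝕜 E) (r : Fin m) :
    ∃ x ≠ 0, x ∈ span 𝕜 (b '' Set.Iic r) ∧ x ∈ span 𝕜 (b' '' Set.Ici r) := by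
  apply Submodule.exists_ne_zero_mem_of_finrank_lt_add
  rw [← Finset.coe_Iic, ← Finset.coe_Ici, finrank_span_image, finrank_span_image,
    Fin.card_Iic, Fin.card_Ici, finrank_eq_card_basis b.toBasis, Fintype.card_fin]
  omega

end OrthonormalBasis

namespace LinearMap.IsSymmetric

variable {ι E : Type*} [Fintype ι] [NormedAddCommGroup E] [InnerProductSpace ℝ E]
  {T : E →ₗ[ℝ] E} {b : OrthonormalBasis ι ℝ E} {μ : ι → ℝ}

theorem inner_apply_self_eq_sum (hT : T.IsSymmetric) (hb : ∀ j, T (b j) = μ j • b j) (x : E) :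
    inner ℝ (T x) x = ∑ j, μ j * b.repr x j ^ 2 := by
  rw [← b.sum_inner_mul_inner]
  refine Finset.sum_congr rfl fun j _ => ?_
  rw [hT, hb, inner_smul_right, real_inner_comm, b.repr_apply_apply]
  ring

theorem inner_apply_self_le_of_mem_span_image (hT : T.IsSymmetric)
    (hb : ∀ j, T (b j) = μ j • b j) {s : Set ι} {c : ℝ} (hc : ∀ j ∈ s, μ j ≤ c) {x : E}
    (hx : x ∈ span ℝ (b '' s)) : inner ℝ (T x) x ≤ c * ‖x‖ ^ 2 := by
  rw [hT.inner_apply_self_eq_sum hb, ← b.sum_sq_norm_inner_right, Finset.mul_sum]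
  refine Finset.sum_le_sum fun j _ => ?_
  rw [Real.norm_eq_abs, sq_abs, ← b.repr_apply_apply]
  by_cases hj : j ∈ s
  · exact mul_le_mul_of_nonneg_right (hc j hj) (sq_nonneg _)
  · simp [b.repr_eq_zero_of_mem_span_image hx hj]

theorem le_inner_apply_self_of_mem_span_image (hT : T.IsSymmetric)
    (hb : ∀ j, T (b j) = μ j • b j) {s : Set ι} {c : ℝ} (hc : ∀ j ∈ s, c ≤ μ j) {x : E}
    (hx : x ∈ span ℝ (b '' s)) : c * ‖x‖ ^ 2 ≤ inner ℝ (T x) x := by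
  rw [hT.inner_apply_self_eq_sum hb, ← b.sum_sq_norm_inner_right, Finset.mul_sum]
  refine Finset.sum_le_sum fun j _ => ?_
  rw [Real.norm_eq_abs, sq_abs, ← b.repr_apply_apply]
  by_cases hj : j ∈ s
  · exact mul_le_mul_of_nonneg_right (hc j hj) (sq_nonneg _)
  · simp [b.repr_eq_zero_of_mem_span_image hx hj]

end LinearMap.IsSymmetric

theorem Matrix.norm_toEuclideanLin_sq {m n : Type*} [Fintype m] [Fintype n] [DecidableEq m]
    [DecidableEq n]
    (M : Matrix m n ℝ) (x : EuclideanSpace ℝ n) :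
    ‖toEuclideanLin M x‖ ^ 2 = inner ℝ (toEuclideanLin (Mᴴ * M) x) x := by
  rw [toLpLin_mul (q := 2), toEuclideanLin_conjTranspose_eq_adjoint, LinearMap.comp_apply,
    LinearMap.adjoint_inner_left, real_inner_self_eq_norm_sq]

section GramEigenvalues

variable {n m : ℕ}

noncomputable def gramEigenvalues (M : Matrix (Fin n) (Fin m) ℝ) : Fin m → ℝ :=
  (isHermitian_conjTranspose_mul_self M).eigenvalues ∘
    Tuple.sort (isHermitian_conjTranspose_mul_self M).eigenvalues

noncomputable def gramEigenbasis (M : Matrix (Fin n) (Fin m) ℝ) :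
    OrthonormalBasis (Fin m) ℝ (EuclideanSpace ℝ (Fin m)) :=
  (isHermitian_conjTranspose_mul_self M).eigenvectorBasis.reindex
    (Tuple.sort (isHermitian_conjTranspose_mul_self M).eigenvalues).symm

theorem sv_eq_sqrt_gramEigenvalues (M : Matrix (Fin n) (Fin m) ℝ) (i : Fin m) :
    sv M i = √(gramEigenvalues M i.rev) := rfl

theorem monotone_gramEigenvalues (M : Matrix (Fin n) (Fin m) ℝ) : Monotone (gramEigenvalues M) :=
  Tuple.monotone_sort _

theorem gramEigenvalues_nonneg (M : Matrix (Fin n) (Fin m) ℝ) (j : Fin m) :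
    0 ≤ gramEigenvalues M j :=
  (posSemidef_conjTranspose_mul_self M).eigenvalues_nonneg _

theorem isSymmetric_toEuclideanLin_gram (M : Matrix (Fin n) (Fin m) ℝ) :
    (toEuclideanLin (Mᴴ * M)).IsSymmetric :=
  isSymmetric_toEuclideanLin_iff.mpr (isHermitian_conjTranspose_mul_self M)

theorem toEuclideanLin_gram_gramEigenbasis (M : Matrix (Fin n) (Fin m) ℝ) (j : Fin m) :
    toEuclideanLin (Mᴴ * M) (gramEigenbasis M j) = gramEigenvalues M j • gramEigenbasis M j := by
  simp only [gramEigenbasis, OrthonormalBasis.reindex_apply, Equiv.symm_symm, toLpLin_apply,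
    (isHermitian_conjTranspose_mul_self M).mulVec_eigenvectorBasis]
  rfl

theorem norm_toEuclideanLin_le_of_mem_span_Iic (M : Matrix (Fin n) (Fin m) ℝ) (r : Fin m)
    {x : EuclideanSpace ℝ (Fin m)} (hx : x ∈ span ℝ (gramEigenbasis M '' Set.Iic r)) :
    ‖toEuclideanLin M x‖ ≤ √(gramEigenvalues M r) * ‖x‖ := by
  rw [← pow_le_pow_iff_left₀ (norm_nonneg _) (by positivity) two_ne_zero, mul_pow,
    Real.sq_sqrt (gramEigenvalues_nonneg M r), norm_toEuclideanLin_sq]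
  exact (isSymmetric_toEuclideanLin_gram M).inner_apply_self_le_of_mem_span_image
    (toEuclideanLin_gram_gramEigenbasis M) (fun j hj => monotone_gramEigenvalues M hj) hx

theorem le_norm_toEuclideanLin_of_mem_span_Ici (M : Matrix (Fin n) (Fin m) ℝ) (r : Fin m)
    {x : EuclideanSpace ℝ (Fin m)} (hx : x ∈ span ℝ (gramEigenbasis M '' Set.Ici r)) :
    √(gramEigenvalues M r) * ‖x‖ ≤ ‖toEuclideanLin M x‖ := by
  rw [← pow_le_pow_iff_left₀ (by positivity) (norm_nonneg _) two_ne_zero, mul_pow,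
    Real.sq_sqrt (gramEigenvalues_nonneg M r), norm_toEuclideanLin_sq]
  exact (isSymmetric_toEuclideanLin_gram M).le_inner_apply_self_of_mem_span_image
    (toEuclideanLin_gram_gramEigenbasis M) (fun j hj => monotone_gramEigenvalues M hj) hx

theorem norm_toEuclideanLin_le_specNorm {p q : ℕ} (B : Matrix (Fin p) (Fin q) ℝ)
    (x : EuclideanSpace ℝ (Fin q)) : ‖toEuclideanLin B x‖ ≤ specNorm B * ‖x‖ :=
  (LinearMap.toContinuousLinearMap (toEuclideanLin B)).le_opNorm x

theorem specNorm_neg {p q : ℕ} (B : Matrix (Fin p) (Fin q) ℝ) : specNorm (-B) = specNorm B := by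
  rw [specNorm, specNorm, map_neg, map_neg, norm_neg]

theorem sv_add_le (A B : Matrix (Fin n) (Fin m) ℝ) (i : Fin m) :
    sv (A + B) i ≤ sv A i + specNorm B := by
  obtain ⟨x, hx0, hxA, hxAB⟩ :=
    (gramEigenbasis A).exists_ne_zero_mem_span_Iic_and_span_Ici (gramEigenbasis (A + B)) i.rev
  rw [sv_eq_sqrt_gramEigenvalues, sv_eq_sqrt_gramEigenvalues]
  refine le_of_mul_le_mul_right ?_ (norm_pos_iff.2 hx0)
  calc √(gramEigenvalues (A + B) i.rev) * ‖x‖ ≤ ‖toEuclideanLin (A + B) x‖ :=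
        le_norm_toEuclideanLin_of_mem_span_Ici _ _ hxAB
    _ ≤ ‖toEuclideanLin A x‖ + ‖toEuclideanLin B x‖ := by
        rw [map_add, LinearMap.add_apply]
        exact norm_add_le _ _
    _ ≤ √(gramEigenvalues A i.rev) * ‖x‖ + specNorm B * ‖x‖ :=
        add_le_add (norm_toEuclideanLin_le_of_mem_span_Iic _ _ hxA)
          (norm_toEuclideanLin_le_specNorm B x)
    _ = (√(gramEigenvalues A i.rev) + specNorm B) * ‖x‖ := by ring

end GramEigenvalues

theorem stmt6_general {n m : ℕ} (A B : Matrix (Fin n) (Fin m) ℝ) (i : Fin m) :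
    |sv (A + B) i - sv A i| ≤ specNorm B := by
  have h := sv_add_le (A + B) (-B) i
  rw [add_neg_cancel_right, specNorm_neg] at h
  rw [abs_sub_le_iff]
  constructor <;> linarith [sv_add_le A B i]

/-- Weyl's inequality for singular values: `|σᵢ(A+B) − σᵢ(A)| ≤ ‖B‖`. -/
theorem stmt6 {n m : ℕ} (A B : Matrix (Fin n) (Fin m) ℝ) (i : Fin m)
    (hi : (i : ℕ) < min m n) :
    |sv (A + B) i - sv A i| ≤ specNorm B :=
  stmt6_general A B i
end

section
/- Let A ∈ ℝ^{n×m}, L ∈ ℝ^{ℓ×m} with ker(L) = {0}, and α > 0. Then (AᵀA + αLᵀL)⁻¹ Aᵀ = Γ Aᵀ (A Γ Aᵀ + αI)⁻¹, where Γ = L† L†ᵀ = (LᵀL)⁻¹. -/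
open Matrix

/-! The identity is the push-through relation `Aᵀ (A Γ Aᵀ + α I) = (AᵀA + α LᵀL) (Γ Aᵀ)`, which
only uses `LᵀL Γ = I`; multiplying it by the two inverses on either side gives the claim. Both
inverses exist because `AᵀA + α LᵀL` and `A Γ Aᵀ + α I` are positive definite for `α > 0`. -/

namespace Matrix

variable {ι κ R : Type*} [Fintype ι] [Fintype κ] [DecidableEq ι] [DecidableEq κ]

theorem mul_add_smul_one_eq_add_smul_mul [CommSemiring R] (A : Matrix κ ι R) (B : Matrix ι κ R)
    {G Γ : Matrix ι ι R} (hG : G * Γ = 1) (α : R) :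
    B * (A * Γ * B + α • 1) = (B * A + α • G) * (Γ * B) := by
  rw [Matrix.mul_add, Matrix.add_mul, Matrix.mul_smul, Matrix.smul_mul, ← Matrix.mul_assoc G,
    hG, Matrix.mul_one, Matrix.one_mul, Matrix.mul_assoc, Matrix.mul_assoc]

theorem inv_mul_eq_mul_inv_of_mul_eq_mul [CommRing R] {M : Matrix ι ι R} {N : Matrix κ κ R}
    {B C : Matrix ι κ R} (hM : IsUnit M) (hN : IsUnit N) (h : B * N = M * C) :
    M⁻¹ * B = C * N⁻¹ := by
  have := hM.invertible
  have := hN.invertible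
  rw [inv_mul_eq_iff_eq_mul_of_invertible, ← Matrix.mul_assoc, ← h, Matrix.mul_assoc,
    mul_inv_of_invertible, Matrix.mul_one]

end Matrix

/-- With `Γ = (LᵀL)⁻¹`: `(AᵀA + αLᵀL)⁻¹Aᵀ = ΓAᵀ(AΓAᵀ + αI)⁻¹`. -/
theorem stmt13 {n m l : ℕ} (A : Matrix (Fin n) (Fin m) ℝ) (L : Matrix (Fin l) (Fin m) ℝ)
    (hL : ∀ x : Fin m → ℝ, L *ᵥ x = 0 → x = 0) (α : ℝ) (hα : 0 < α) :
    (Aᵀ * A + α • (Lᵀ * L))⁻¹ * Aᵀ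
      = (Lᵀ * L)⁻¹ * Aᵀ * (A * (Lᵀ * L)⁻¹ * Aᵀ + α • (1 : Matrix (Fin n) (Fin n) ℝ))⁻¹ := by
  have hLinj : Function.Injective L.mulVec := fun x y hxy =>
    sub_eq_zero.1 (hL _ (by rw [mulVec_sub, hxy, sub_self]))
  have hLL : (Lᵀ * L).PosDef := by simpa using PosDef.conjTranspose_mul_self L hLinj
  have hM : (Aᵀ * A + α • (Lᵀ * L)).PosDef := by
    simpa using (hLL.smul hα).posSemidef_add (posSemidef_conjTranspose_mul_self A)
  have hN : (A * (Lᵀ * L)⁻¹ * Aᵀ + α • (1 : Matrix (Fin n) (Fin n) ℝ)).PosDef := by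
    simpa using (PosDef.one.smul hα).posSemidef_add
      (hLL.inv.posSemidef.mul_mul_conjTranspose_same A)
  exact inv_mul_eq_mul_inv_of_mul_eq_mul hM.isUnit hN.isUnit
    (mul_add_smul_one_eq_add_smul_mul A Aᵀ
      (mul_nonsing_inv _ ((isUnit_iff_isUnit_det _).1 hLL.isUnit)) α)
end

section
/- Let A, Ã_k ∈ ℝ^{n×m} with Ã_k = P̃_k A for an orthogonal projection P̃_k, and α > 0. Then ‖[(AAᵀ + αI)(Ã_k Ã_kᵀ + αI)⁻¹ − I] AAᵀ‖ ≤ 2‖A‖ (2α⁻¹‖A‖‖A − Ã_k‖ + 1) ‖A − Ã_k‖ in spectral norm. -/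
open Matrix

/-!
With `B = AAᵀ`, `M = ÃₖÃₖᵀ` and `C = M + αI`, one has `(B + αI)C⁻¹ − I = (B − M)C⁻¹`, so the
matrix to bound is `(B − M)(C⁻¹(B − M) + C⁻¹M)`. For a positive operator `T` and `α > 0`,
`‖(T + α)y‖` dominates both `α‖y‖` and `‖Ty‖` (the cross term `2α⟪Ty, y⟫` is nonnegative), whence
`‖C⁻¹‖ ≤ α⁻¹` and `‖C⁻¹M‖ ≤ 1`. Finally `‖B − M‖ ≤ (‖A‖ + ‖Ãₖ‖)‖A − Ãₖ‖ ≤ 2‖A‖‖A − Ãₖ‖`, because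
an orthogonal projection has norm at most one.
-/

open scoped Matrix.Norms.L2Operator

section PositiveOperator

variable {E : Type*} [NormedAddCommGroup E] [InnerProductSpace ℝ E]

theorem norm_le_norm_add_of_inner_nonneg {u w : E} (h : 0 ≤ inner ℝ u w) : ‖u‖ ≤ ‖u + w‖ := by
  refine le_of_pow_le_pow_left₀ two_ne_zero (norm_nonneg _) ?_
  rw [norm_add_sq_real]
  nlinarith [sq_nonneg ‖w‖]

namespace ContinuousLinearMap.IsPositive

variable {T : E →L[ℝ] E} {α : ℝ}

theorem norm_apply_le_norm_add_smul (hT : T.IsPositive) (hα : 0 ≤ α) (x : E) :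
    ‖T x‖ ≤ ‖T x + α • x‖ :=
  norm_le_norm_add_of_inner_nonneg <| by
    rw [real_inner_smul_right]
    exact mul_nonneg hα (hT.inner_nonneg_left x)

theorem mul_norm_le_norm_add_smul (hT : T.IsPositive) (hα : 0 ≤ α) (x : E) :
    α * ‖x‖ ≤ ‖T x + α • x‖ := by
  have hαx : ‖α • x‖ = α * ‖x‖ := by rw [norm_smul, Real.norm_of_nonneg hα]
  rw [← hαx, add_comm]
  exact norm_le_norm_add_of_inner_nonneg <| by
    rw [real_inner_smul_left]
    exact mul_nonneg hα (hT.inner_nonneg_right x)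

theorem norm_le_inv_of_add_smul_one_mul_eq_one (hT : T.IsPositive) (hα : 0 < α)
    {S : E →L[ℝ] E} (hS : (T + α • 1) * S = 1) : ‖S‖ ≤ α⁻¹ := by
  refine opNorm_le_bound _ (inv_nonneg.2 hα.le) fun x => ?_
  rw [inv_mul_eq_div, le_div_iff₀' hα]
  simpa using (hT.mul_norm_le_norm_add_smul hα.le (S x)).trans_eq congr(‖$hS x‖)

theorem norm_mul_le_one_of_add_smul_one_mul_eq_one (hT : T.IsPositive) (hα : 0 ≤ α)
    {S : E →L[ℝ] E} (hS : (T + α • 1) * S = 1) : ‖T * S‖ ≤ 1 := by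
  refine opNorm_le_bound _ zero_le_one fun x => ?_
  simpa using (hT.norm_apply_le_norm_add_smul hα (S x)).trans_eq congr(‖$hS x‖)

end ContinuousLinearMap.IsPositive

end PositiveOperator

namespace Matrix

section Square

variable {n : Type*} [Fintype n] [DecidableEq n] {M : Matrix n n ℝ} {α : ℝ}

theorem PosSemidef.isPositive_toEuclideanCLM (hM : M.PosSemidef) :
    (toEuclideanCLM (𝕜 := ℝ) M).IsPositive := by
  rw [← ContinuousLinearMap.isPositive_toLinearMap_iff, coe_toEuclideanCLM_eq_toEuclideanLin]
  exact isPositive_toEuclideanLin_iff.2 hM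

theorem PosSemidef.isUnit_add_smul_one (hM : M.PosSemidef) (hα : 0 < α) :
    IsUnit (M + α • 1) :=
  (PosDef.posSemidef_add hM (PosDef.one.smul hα)).isUnit

theorem PosSemidef.add_smul_one_mul_inv (hM : M.PosSemidef) (hα : 0 < α) :
    (M + α • 1) * (M + α • 1)⁻¹ = 1 :=
  mul_nonsing_inv _ <| (isUnit_iff_isUnit_det _).1 (hM.isUnit_add_smul_one hα)

theorem PosSemidef.toEuclideanCLM_add_smul_one_mul_inv (hM : M.PosSemidef) (hα : 0 < α) :
    (toEuclideanCLM (𝕜 := ℝ) M + α • 1) * toEuclideanCLM (𝕜 := ℝ) (M + α • 1)⁻¹ = 1 := by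
  simpa only [map_mul, map_add, map_smul, map_one] using
    congr(toEuclideanCLM (𝕜 := ℝ) $(hM.add_smul_one_mul_inv hα))

theorem PosSemidef.l2_opNorm_inv_add_smul_one_le (hM : M.PosSemidef) (hα : 0 < α) :
    ‖(M + α • 1)⁻¹‖ ≤ α⁻¹ := by
  rw [← l2_opNorm_toEuclideanCLM]
  exact hM.isPositive_toEuclideanCLM.norm_le_inv_of_add_smul_one_mul_eq_one hα
    (hM.toEuclideanCLM_add_smul_one_mul_inv hα)

theorem PosSemidef.l2_opNorm_inv_add_smul_one_mul_le_one (hM : M.PosSemidef) (hα : 0 < α) :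
    ‖(M + α • 1)⁻¹ * M‖ ≤ 1 := by
  have hcomm : Commute M (M + α • 1)⁻¹ := by
    have := ((Commute.refl M).add_right ((Commute.one_right M).smul_right α)).units_inv_right
      (u := (hM.isUnit_add_smul_one hα).unit)
    rwa [coe_units_inv, IsUnit.unit_spec] at this
  rw [← hcomm.eq, ← l2_opNorm_toEuclideanCLM, map_mul]
  exact hM.isPositive_toEuclideanCLM.norm_mul_le_one_of_add_smul_one_mul_eq_one hα.le
    (hM.toEuclideanCLM_add_smul_one_mul_inv hα)

end Square

variable {m n : Type*} [Fintype m] [Fintype n] [DecidableEq m] [DecidableEq n]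

theorem l2_opNorm_transpose (A : Matrix m n ℝ) : ‖Aᵀ‖ = ‖A‖ := by
  rw [← conjTranspose_eq_transpose_of_trivial, l2_opNorm_conjTranspose]

theorem l2_opNorm_mul_transpose_sub_le (A B : Matrix m n ℝ) :
    ‖A * Aᵀ - B * Bᵀ‖ ≤ (‖A‖ + ‖B‖) * ‖A - B‖ := by
  have hsplit : A * Aᵀ - B * Bᵀ = A * (A - B)ᵀ + (A - B) * Bᵀ := by
    rw [transpose_sub, Matrix.mul_sub, Matrix.sub_mul]
    abel
  calc ‖A * Aᵀ - B * Bᵀ‖ ≤ ‖A‖ * ‖(A - B)ᵀ‖ + ‖A - B‖ * ‖Bᵀ‖ := by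
        rw [hsplit]
        exact (norm_add_le _ _).trans (add_le_add (l2_opNorm_mul _ _) (l2_opNorm_mul _ _))
    _ = (‖A‖ + ‖B‖) * ‖A - B‖ := by
        rw [l2_opNorm_transpose, l2_opNorm_transpose]
        ring

theorem PosSemidef.l2_opNorm_add_smul_one_mul_inv_sub_one_mul_le {M : Matrix m m ℝ}
    (hM : M.PosSemidef) {α : ℝ} (hα : 0 < α) (B : Matrix m m ℝ) :
    ‖((B + α • 1) * (M + α • 1)⁻¹ - 1) * B‖ ≤ ‖B - M‖ * (α⁻¹ * ‖B - M‖ + 1) := by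
  set C := M + α • 1 with hC
  have hfactor : ((B + α • 1) * C⁻¹ - 1) * B = (B - M) * (C⁻¹ * (B - M) + C⁻¹ * M) := by
    have hB : B + α • 1 = (B - M) + C := by rw [hC]; abel
    rw [← Matrix.mul_add, sub_add_cancel, hB, Matrix.add_mul, hM.add_smul_one_mul_inv hα,
      add_sub_cancel_right, Matrix.mul_assoc]
  calc ‖((B + α • 1) * C⁻¹ - 1) * B‖ ≤ ‖B - M‖ * (‖C⁻¹‖ * ‖B - M‖ + ‖C⁻¹ * M‖) := by
        rw [hfactor]
        refine (l2_opNorm_mul _ _).trans ?_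
        gcongr
        exact (norm_add_le _ _).trans (by gcongr; exact l2_opNorm_mul _ _)
    _ ≤ ‖B - M‖ * (α⁻¹ * ‖B - M‖ + 1) := by
        gcongr
        exacts [hM.l2_opNorm_inv_add_smul_one_le hα, hM.l2_opNorm_inv_add_smul_one_mul_le_one hα]

end Matrix

theorem specNorm_eq_l2_opNorm {p q : ℕ} (A : Matrix (Fin p) (Fin q) ℝ) : specNorm A = ‖A‖ := rfl

/-- `‖[(AAᵀ + αI)(ÃₖÃₖᵀ + αI)⁻¹ − I]AAᵀ‖ ≤ 2‖A‖(2α⁻¹‖A‖‖A − Ãₖ‖ + 1)‖A − Ãₖ‖`. -/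
theorem stmt15 {n m : ℕ} (A Ak : Matrix (Fin n) (Fin m) ℝ) (P : Matrix (Fin n) (Fin n) ℝ)
    (hPsym : Pᵀ = P) (hPidem : P * P = P) (hAk : Ak = P * A) (α : ℝ) (hα : 0 < α) :
    specNorm (((A * Aᵀ + α • (1 : Matrix (Fin n) (Fin n) ℝ))
        * (Ak * Akᵀ + α • (1 : Matrix (Fin n) (Fin n) ℝ))⁻¹ - 1) * (A * Aᵀ))
      ≤ 2 * specNorm A * (2 * α⁻¹ * specNorm A * specNorm (A - Ak) + 1)
          * specNorm (A - Ak) := by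
  simp only [specNorm_eq_l2_opNorm]
  have hAk_le : ‖Ak‖ ≤ ‖A‖ := by
    rw [hAk]
    exact (l2_opNorm_mul P A).trans
      (mul_le_of_le_one_left (norm_nonneg A) (IsStarProjection.norm_le P ⟨hPidem, hPsym⟩))
  have hgap : ‖A * Aᵀ - Ak * Akᵀ‖ ≤ 2 * ‖A‖ * ‖A - Ak‖ :=
    (l2_opNorm_mul_transpose_sub_le A Ak).trans
      (mul_le_mul_of_nonneg_right (by linarith) (norm_nonneg _))
  have hpsd : (Ak * Akᵀ).PosSemidef := by
    simpa only [conjTranspose_eq_transpose_of_trivial] using posSemidef_self_mul_conjTranspose Ak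
  calc _ ≤ ‖A * Aᵀ - Ak * Akᵀ‖ * (α⁻¹ * ‖A * Aᵀ - Ak * Akᵀ‖ + 1) :=
        hpsd.l2_opNorm_add_smul_one_mul_inv_sub_one_mul_le hα _
    _ ≤ 2 * ‖A‖ * ‖A - Ak‖ * (α⁻¹ * (2 * ‖A‖ * ‖A - Ak‖) + 1) := by gcongr
    _ = _ := by ring
end
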